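/- Let β > 1 and k > 0 be real constants and d, u : ℝ → ℝ. Let x₁, x₂ be differentiable at a time t with x₁(t) ≠ 0, satisfying ẋ₁(t) = x₂(t) and ẋ₂(t) = u(t) + d(t). Then the power-tower terminal sliding surface s = x₂ + k·sign(x₁)·|x₁|^(|x₁|^β) is differentiable at t with ṡ(t) = u(t) + d(t) + k·|x₁(t)|^(|x₁(t)|^β + β − 1)·(1 + β·ln|x₁(t)|)·x₂(t). -/

import Mathlib

/-!
Away from `0` the sign is locally constant, so the odd extension `x ↦ sign x * f |x|`
has the same derivative at `x` as `f` at `|x|`. On `y > 0` the power tower `y ^ y ^ β`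
is differentiated by the rule for `f ^ g`, and both of its terms collapse to multiples
of the single power `y ^ (y ^ β + β - 1)`. The chain rule along `ẋ₁ = x₂` then gives `ṡ`.
-/

open Real Filter

theorem HasDerivAt.sign_mul_comp_abs {f : ℝ → ℝ} {f' x : ℝ} (hx : x ≠ 0)
    (hf : HasDerivAt f f' |x|) : HasDerivAt (fun y => sign y * f |y|) f' x := by
  rcases hx.lt_or_gt with hneg | hpos
  · rw [abs_of_neg hneg] at hf
    have hreflect : HasDerivAt (fun y => -f (-y)) f' x := by
      simpa only [Function.comp_apply, mul_neg, mul_one, neg_neg] using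
        (hf.comp x (hasDerivAt_neg x)).fun_neg
    refine hreflect.congr_of_eventuallyEq ?_
    filter_upwards [eventually_lt_nhds hneg] with y hy
    rw [sign_of_neg hy, abs_of_neg hy, neg_one_mul]
  · rw [abs_of_pos hpos] at hf
    refine hf.congr_of_eventuallyEq ?_
    filter_upwards [eventually_gt_nhds hpos] with y hy
    rw [sign_of_pos hy, abs_of_pos hy, one_mul]

theorem hasDerivAt_rpow_rpow_self {y : ℝ} (β : ℝ) (hy : 0 < y) :
    HasDerivAt (fun z => z ^ z ^ β) (y ^ (y ^ β + β - 1) * (1 + β * log y)) y := by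
  refine ((hasDerivAt_id' y).rpow (hasDerivAt_rpow_const (Or.inl hy.ne')) hy).congr_deriv ?_
  have hfirst : y ^ β * y ^ (y ^ β - 1) = y ^ (y ^ β + β - 1) := by
    rw [← rpow_add hy]; ring_nf
  have hsecond : y ^ (β - 1) * y ^ y ^ β = y ^ (y ^ β + β - 1) := by
    rw [← rpow_add hy]; ring_nf
  linear_combination hfirst + β * log y * hsecond

theorem powerTower_terminal_surface_deriv_general (β k : ℝ)
    (d u : ℝ → ℝ) (x₁ x₂ : ℝ → ℝ) (t x₁' x₂' : ℝ)
    (hx₁ : HasDerivAt x₁ x₁' t) (hx₂ : HasDerivAt x₂ x₂' t)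
    (hne : x₁ t ≠ 0)
    (h1 : x₁' = x₂ t) (h2 : x₂' = u t + d t) :
    HasDerivAt (fun s : ℝ => x₂ s + k * Real.sign (x₁ s) * |x₁ s| ^ (|x₁ s| ^ β))
      (u t + d t +
        k * |x₁ t| ^ (|x₁ t| ^ β + β - 1) * (1 + β * Real.log |x₁ t|) * x₂ t) t := by
  subst h1 h2
  have htower : HasDerivAt (fun s => sign (x₁ s) * |x₁ s| ^ |x₁ s| ^ β)
      (|x₁ t| ^ (|x₁ t| ^ β + β - 1) * (1 + β * log |x₁ t|) * x₂ t) t :=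
    (HasDerivAt.sign_mul_comp_abs hne
      (hasDerivAt_rpow_rpow_self β (abs_pos.mpr hne))).comp t hx₁
  simpa only [mul_assoc] using hx₂.fun_add (htower.const_mul k)

/-- Power-tower terminal sliding surface: s = x₂ + k·sign(x₁)·|x₁|^(|x₁|^β) is
differentiable along the perturbed double integrator with
ṡ = u + d + k·|x₁|^(|x₁|^β + β − 1)·(1 + β·ln|x₁|)·x₂. -/
theorem powerTower_terminal_surface_deriv (β k : ℝ) (hβ : 1 < β) (hk : 0 < k)
    (d u : ℝ → ℝ) (x₁ x₂ : ℝ → ℝ) (t x₁' x₂' : ℝ)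
    (hx₁ : HasDerivAt x₁ x₁' t) (hx₂ : HasDerivAt x₂ x₂' t)
    (hne : x₁ t ≠ 0)
    (h1 : x₁' = x₂ t) (h2 : x₂' = u t + d t) :
    HasDerivAt (fun s : ℝ => x₂ s + k * Real.sign (x₁ s) * |x₁ s| ^ (|x₁ s| ^ β))
      (u t + d t +
        k * |x₁ t| ^ (|x₁ t| ^ β + β - 1) * (1 + β * Real.log |x₁ t|) * x₂ t) t :=
  powerTower_terminal_surface_deriv_general β k d u x₁ x₂ t x₁' x₂' hx₁ hx₂ hne h1 h2
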